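/- (Proposition 6, Max-Max scheme as a limit) Fix positive reals a, b, L_1, L_2, γ_th and positive integers K, N, and define G_d = K·N·a/2 and G_c = (a·Γ(a))^{2/a} · b² / (L_1² L_2² · γ_th). Let F(γ̄) = ( Υ(a, √((L_1² L_2² / b²)·(γ_th/γ̄))) / Γ(a) )^{K·N} for γ̄ > 0. Then F(γ̄) · (G_c · γ̄)^{G_d} → 1 as γ̄ → ∞; that is, the outage probability of the Max-Max scheme behaves asymptotically as (G_c · γ̄)^{−G_d} in the high-SNR regime. -/

import Mathlib

open Filter

/-- The lower incomplete Gamma function `Υ(s, x) = ∫_0^x t^(s-1) e^(-t) dt`. -/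
noncomputable def lowerIncGamma (s x : ℝ) : ℝ :=
  ∫ t in (0:ℝ)..x, t ^ (s - 1) * Real.exp (-t)

/-!
For small `x` the factor `e^(-t)` in `Υ(a, x)` lies between `e^(-x)` and `1`, so
`a Υ(a, x) / x^a → 1` as `x → 0⁺`. With `x = √(c/γ̄)`, `c = L₁²L₂²γ_th/b²`, the coding gain is
chosen so that `F(γ̄) (G_c γ̄)^{G_d}` is exactly `(a Υ(a, x) / x^a)^{KN}`.
-/

open Real Set Topology

lemma integral_rpow_sub_one {a x : ℝ} (ha : 0 < a) :
    ∫ t in (0:ℝ)..x, t ^ (a - 1) = x ^ a / a := by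
  rw [integral_rpow (Or.inl (by linarith)), sub_add_cancel, zero_rpow ha.ne', sub_zero]

lemma intervalIntegrable_rpow_sub_one {a x : ℝ} (ha : 0 < a) :
    IntervalIntegrable (fun t : ℝ => t ^ (a - 1)) MeasureTheory.volume 0 x :=
  intervalIntegral.intervalIntegrable_rpow' (by linarith)

lemma intervalIntegrable_rpow_sub_one_mul_exp_neg {a x : ℝ} (ha : 0 < a) :
    IntervalIntegrable (fun t : ℝ => t ^ (a - 1) * exp (-t)) MeasureTheory.volume 0 x :=
  (intervalIntegrable_rpow_sub_one ha).mul_continuousOn (by fun_prop)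

lemma lowerIncGamma_le {a x : ℝ} (ha : 0 < a) (hx : 0 ≤ x) :
    lowerIncGamma a x ≤ x ^ a / a := by
  rw [← integral_rpow_sub_one ha]
  refine intervalIntegral.integral_mono_on hx (intervalIntegrable_rpow_sub_one_mul_exp_neg ha)
    (intervalIntegrable_rpow_sub_one ha) fun t ht => ?_
  exact mul_le_of_le_one_right (rpow_nonneg ht.1 _) (exp_le_one_iff.2 (by linarith [ht.1]))

lemma exp_neg_mul_le_lowerIncGamma {a x : ℝ} (ha : 0 < a) (hx : 0 ≤ x) :
    exp (-x) * (x ^ a / a) ≤ lowerIncGamma a x := by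
  rw [← integral_rpow_sub_one ha, ← intervalIntegral.integral_const_mul]
  refine intervalIntegral.integral_mono_on hx ((intervalIntegrable_rpow_sub_one ha).const_mul _)
    (intervalIntegrable_rpow_sub_one_mul_exp_neg ha) fun t ht => ?_
  rw [mul_comm]
  exact mul_le_mul_of_nonneg_left (exp_le_exp.2 (by linarith [ht.2])) (rpow_nonneg ht.1 _)

lemma tendsto_mul_lowerIncGamma_div_rpow {a : ℝ} (ha : 0 < a) :
    Tendsto (fun x => a * lowerIncGamma a x / x ^ a) (𝓝[>] 0) (𝓝 1) := by
  have hexp : Tendsto (fun x : ℝ => exp (-x)) (𝓝[>] 0) (𝓝 1) := by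
    exact ((show Continuous fun x : ℝ => exp (-x) by fun_prop).tendsto' 0 1 (by simp)).mono_left
      nhdsWithin_le_nhds
  refine tendsto_of_tendsto_of_tendsto_of_le_of_le' hexp tendsto_const_nhds ?_ ?_ <;>
    filter_upwards [self_mem_nhdsWithin] with x (hx : 0 < x)
  · rw [le_div_iff₀ (rpow_pos_of_pos hx a)]
    have := mul_le_mul_of_nonneg_left (exp_neg_mul_le_lowerIncGamma ha hx.le) ha.le
    field_simp at this ⊢
    linarith
  · rw [div_le_one (rpow_pos_of_pos hx a)]
    have := mul_le_mul_of_nonneg_left (lowerIncGamma_le ha hx.le) ha.le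
    field_simp at this ⊢
    linarith

lemma tendsto_sqrt_div_atTop_nhdsGT_zero {c : ℝ} (hc : 0 < c) :
    Tendsto (fun γ : ℝ => √(c / γ)) atTop (𝓝[>] 0) := by
  refine tendsto_nhdsWithin_iff.2 ⟨?_, ?_⟩
  · exact (continuous_sqrt.tendsto' 0 0 sqrt_zero).comp (tendsto_const_nhds.div_atTop tendsto_id)
  · filter_upwards [eventually_gt_atTop 0] with γ hγ
    exact sqrt_pos.2 (div_pos hc hγ)

lemma rpow_two_div_mul_inv_rpow_eq {a A y : ℝ} (ha : 0 < a) (hA : 0 < A) (hy : 0 < y) (n : ℕ) :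
    (A ^ (2 / a) * y⁻¹) ^ (n * a / 2) = (A / √y ^ a) ^ n := by
  have hsqrt : √y ^ a = y ^ (a / 2) := by
    rw [sqrt_eq_rpow, ← rpow_mul hy.le, one_div_mul_eq_div]
  rw [mul_rpow (rpow_nonneg hA.le _) (inv_nonneg.2 hy.le), ← rpow_mul hA.le,
    show 2 / a * (n * a / 2) = n by field_simp, hsqrt, div_pow, inv_rpow hy.le,
    ← rpow_natCast (y ^ (a / 2)), ← rpow_mul hy.le, rpow_natCast,
    show (n : ℝ) * a / 2 = a / 2 * n by ring, ← div_eq_mul_inv]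

theorem stmt_15_general (a b L1 L2 γth : ℝ) (K N : ℕ)
    (ha : 0 < a) (hb : 0 < b) (hL1 : 0 < L1) (hL2 : 0 < L2) (hγth : 0 < γth)
    (Gd Gc : ℝ) (hGd : Gd = K * N * a / 2)
    (hGc : Gc = (a * Real.Gamma a) ^ (2 / a) * b ^ 2 / (L1 ^ 2 * L2 ^ 2 * γth))
    (F : ℝ → ℝ)
    (hF : ∀ γbar : ℝ, 0 < γbar → F γbar
        = (lowerIncGamma a (Real.sqrt (L1 ^ 2 * L2 ^ 2 / b ^ 2 * (γth / γbar)))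
            / Real.Gamma a) ^ (K * N)) :
    Tendsto (fun γbar : ℝ => F γbar * (Gc * γbar) ^ Gd) atTop (nhds 1) := by
  set c : ℝ := L1 ^ 2 * L2 ^ 2 * γth / b ^ 2
  have hc : 0 < c := by positivity
  have hlim := ((tendsto_mul_lowerIncGamma_div_rpow ha).comp
    (tendsto_sqrt_div_atTop_nhdsGT_zero hc)).pow (K * N)
  rw [one_pow] at hlim
  refine hlim.congr' ?_
  filter_upwards [eventually_gt_atTop 0] with γ hγ
  have hGcγ : Gc * γ = (a * Gamma a) ^ (2 / a) * (c / γ)⁻¹ := by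
    simp only [hGc, c]; field_simp
  rw [hF γ hγ, hGcγ, hGd, ← Nat.cast_mul,
    rpow_two_div_mul_inv_rpow_eq ha (by positivity) (div_pos hc hγ),
    show L1 ^ 2 * L2 ^ 2 / b ^ 2 * (γth / γ) = c / γ by ring, ← mul_pow]
  simp only [Function.comp_apply]
  field_simp

/-- Proposition 6, Max-Max scheme: in the high-SNR regime the Max-Max outage
probability behaves as `(G_c γ̄)^{-G_d}` with diversity gain `G_d = KNa/2` and coding gain
`G_c = (aΓ(a))^{2/a} b² / (L₁²L₂²γ_th)`. -/
theorem stmt_15 (a b L1 L2 γth : ℝ) (K N : ℕ)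
    (ha : 0 < a) (hb : 0 < b) (hL1 : 0 < L1) (hL2 : 0 < L2) (hγth : 0 < γth)
    (hK : 0 < K) (hN : 0 < N)
    (Gd Gc : ℝ) (hGd : Gd = K * N * a / 2)
    (hGc : Gc = (a * Real.Gamma a) ^ (2 / a) * b ^ 2 / (L1 ^ 2 * L2 ^ 2 * γth))
    (F : ℝ → ℝ)
    (hF : ∀ γbar : ℝ, 0 < γbar → F γbar
        = (lowerIncGamma a (Real.sqrt (L1 ^ 2 * L2 ^ 2 / b ^ 2 * (γth / γbar)))
            / Real.Gamma a) ^ (K * N)) :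
    Tendsto (fun γbar : ℝ => F γbar * (Gc * γbar) ^ Gd) atTop (nhds 1) :=
  stmt_15_general a b L1 L2 γth K N ha hb hL1 hL2 hγth Gd Gc hGd hGc F hF
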